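/- (Second-level identification system.) Let d, n ≥ 1, let φ_1, …, φ_n ∈ ℂ^d and α_1, …, α_n ∈ ℂ, let f(x) = Σ_{j=1}^n α_j exp(⟨φ_j, x⟩), and let Δ, δ₁, δ₂ ∈ ℂ^d. Suppose there are indices 0 = g_0 < g_1 < … < g_μ = n such that ⟨φ_k, Δ⟩ = ⟨φ_{g_j}, Δ⟩ and ⟨φ_k, δ₁⟩ = ⟨φ_{g_j}, δ₁⟩ for all k with g_{j−1} < k ≤ g_j, and set Ω_j = ⟨φ_{g_j}, Δ⟩ + ⟨φ_{g_j}, δ₁⟩. Assume exp(Ω_1), …, exp(Ω_μ) are pairwise distinct. Fix an integer s ≥ 0 and define the samples F_{sℓ} = f((ℓ−1)(Δ + δ₁) + sδ₂) for ℓ = 1, …, μ. Then the μ×μ Vandermonde system whose (ℓ, j) entry is exp((ℓ−1)Ω_j) and whose right-hand side is (F_{s1}, …, F_{sμ})ᵀ has the unique solution A_{sj} = Σ_{k=g_{j−1}+1}^{g_j} α_k exp(⟨φ_k, sδ₂⟩), j = 1, …, μ. -/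

import Mathlib

/-!
On the `j`-th pile the exponent `⟨φ_k, ℓ(Δ + δ₁) + sδ₂⟩` splits as `ℓ Ω_j + ⟨φ_k, sδ₂⟩`, so
grouping the terms of `f` by piles writes each sample `F ℓ` as `∑_j exp(Ω_j)^ℓ A_{sj}`.
Uniqueness holds because the Vandermonde matrix on the distinct nodes `exp Ω_j` is invertible.
-/

open Finset

theorem Finset.sum_Ico_eq_sum_fin_blocks {M : Type*} [AddCommMonoid M] {μ : ℕ}
    (g : Fin (μ + 1) → ℕ) (hg : Monotone g) (f : ℕ → M) :
    ∑ k ∈ Ico (g 0) (g (Fin.last μ)), f k =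
      ∑ j : Fin μ, ∑ k ∈ Ico (g j.castSucc) (g j.succ), f k := by
  induction μ with
  | zero => simp
  | succ μ ih =>
    have h := ih (g ∘ Fin.castSucc) (hg.comp Fin.strictMono_castSucc.monotone)
    simp only [Function.comp_apply, ← Fin.succ_castSucc, Fin.castSucc_zero] at h
    rw [Fin.sum_univ_castSucc, ← h, sum_Ico_consecutive f (hg (Fin.zero_le _))
      (hg (Fin.castSucc_le_succ (Fin.last μ))), Fin.succ_last]

theorem Matrix.eq_of_forall_sum_pow_mul_eq {R : Type*} [CommRing R] [IsDomain R] {n : ℕ}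
    {x A B : Fin n → R} (hx : Function.Injective x)
    (h : ∀ ℓ : Fin n, ∑ j, x j ^ (ℓ : ℕ) * A j = ∑ j, x j ^ (ℓ : ℕ) * B j) : A = B :=
  sub_eq_zero.1 <| eq_zero_of_forall_pow_sum_mul_pow_eq_zero hx fun ℓ => by
    simp only [Pi.sub_apply, sub_mul, sum_sub_distrib, mul_comm (A _), mul_comm (B _), h ℓ,
      sub_self]

theorem Finset.sum_mul_mul_add_add {R ι : Type*} [CommSemiring R] [Fintype ι]
    (v a b e : ι → R) (c : R) :
    ∑ i, v i * (c * (a i + b i) + e i) =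
      c * (∑ i, v i * a i + ∑ i, v i * b i) + ∑ i, v i * e i := by
  simp only [mul_add, sum_add_distrib, mul_sum, mul_left_comm]

/-- Terms and piles are 0-indexed: pile `j` is `Ico (g j.castSucc) (g j.succ)` with representative
`g j.succ - 1`, and the row `ℓ : Fin μ` stands for the paper's `ℓ + 1`. -/
theorem second_level_identification_system_general
    (d n μ : ℕ)
    (φ : ℕ → Fin d → ℂ) (α : ℕ → ℂ) (Δ δ₁ δ₂ : Fin d → ℂ)
    (g : Fin (μ + 1) → ℕ) (gmono : StrictMono g)
    (g0 : g 0 = 0) (glast : g (Fin.last μ) = n)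
    (hcolΔ : ∀ j : Fin μ, ∀ k : ℕ, g j.castSucc ≤ k → k < g j.succ →
      ∑ i, φ k i * Δ i = ∑ i, φ (g j.succ - 1) i * Δ i)
    (hcolδ₁ : ∀ j : Fin μ, ∀ k : ℕ, g j.castSucc ≤ k → k < g j.succ →
      ∑ i, φ k i * δ₁ i = ∑ i, φ (g j.succ - 1) i * δ₁ i)
    (Ω : Fin μ → ℂ)
    (hΩ : ∀ j : Fin μ, Ω j =
      (∑ i, φ (g j.succ - 1) i * Δ i) + ∑ i, φ (g j.succ - 1) i * δ₁ i)
    (hdist : Function.Injective fun j : Fin μ => Complex.exp (Ω j))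
    (s : ℕ) (F : Fin μ → ℂ)
    (hF : ∀ ℓ : Fin μ, F ℓ = ∑ k ∈ Finset.range n, α k *
      Complex.exp (∑ i, φ k i *
        (((ℓ : ℕ) : ℂ) * (Δ i + δ₁ i) + (s : ℂ) * δ₂ i))) :
    (∀ ℓ : Fin μ, ∑ j : Fin μ,
        Complex.exp (((ℓ : ℕ) : ℂ) * Ω j) *
          (∑ k ∈ Finset.Ico (g j.castSucc) (g j.succ),
            α k * Complex.exp (∑ i, φ k i * ((s : ℂ) * δ₂ i))) = F ℓ) ∧
    ∀ A : Fin μ → ℂ,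
      (∀ ℓ : Fin μ, ∑ j : Fin μ,
        Complex.exp (((ℓ : ℕ) : ℂ) * Ω j) * A j = F ℓ) →
      A = fun j => ∑ k ∈ Finset.Ico (g j.castSucc) (g j.succ),
        α k * Complex.exp (∑ i, φ k i * ((s : ℂ) * δ₂ i)) := by
  have hrange : range n = Ico (g 0) (g (Fin.last μ)) := by rw [g0, glast, range_eq_Ico]
  have hsystem : ∀ ℓ : Fin μ, ∑ j : Fin μ,
      Complex.exp (((ℓ : ℕ) : ℂ) * Ω j) *
        (∑ k ∈ Ico (g j.castSucc) (g j.succ),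
          α k * Complex.exp (∑ i, φ k i * ((s : ℂ) * δ₂ i))) = F ℓ := by
    intro ℓ
    rw [hF, hrange, sum_Ico_eq_sum_fin_blocks g gmono.monotone]
    refine sum_congr rfl fun j _ => ?_
    rw [mul_sum]
    refine sum_congr rfl fun k hk => ?_
    obtain ⟨hlo, hhi⟩ := mem_Ico.1 hk
    rw [sum_mul_mul_add_add, hcolΔ j k hlo hhi, hcolδ₁ j k hlo hhi, ← hΩ, Complex.exp_add]
    ring
  refine ⟨hsystem, fun A hA => Matrix.eq_of_forall_sum_pow_mul_eq hdist fun ℓ => ?_⟩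
  simp only [← Complex.exp_nat_mul]
  rw [hA ℓ, hsystem ℓ]

/-- Second-level identification system.  Terms are indexed `0, …, n-1`
(0-indexed version of `1, …, n`) and `g : Fin (μ+1) → ℕ` encodes the
collision indices `0 = g_0 < g_1 < … < g_μ = n`; pile `j` consists of the
terms `k` with `g_{j-1} ≤ k < g_j`, with representative `g_j - 1`.  Assume
both `⟨φ k, Δ⟩` and `⟨φ k, δ₁⟩` are constant on each pile, set
`Ω j = ⟨φ_{g_j}, Δ⟩ + ⟨φ_{g_j}, δ₁⟩`, and assume the values `exp (Ω j)` are
pairwise distinct.  For fixed `s`, the samples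
`F ℓ = f((ℓ-1)(Δ+δ₁) + sδ₂)`, `ℓ = 1, …, μ` (encoded by `ℓ : Fin μ` standing
for `ℓ-1`), satisfy the `μ×μ` Vandermonde system with `(ℓ, j)` entry
`exp ((ℓ-1) Ω j)`, whose unique solution is
`A j = ∑_{k ∈ pile j} α k * exp ⟨φ k, sδ₂⟩`. -/
theorem second_level_identification_system
    (d n μ : ℕ) (hd : 1 ≤ d) (hn : 1 ≤ n) (hμ : 1 ≤ μ)
    (φ : ℕ → Fin d → ℂ) (α : ℕ → ℂ) (Δ δ₁ δ₂ : Fin d → ℂ)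
    (g : Fin (μ + 1) → ℕ) (gmono : StrictMono g)
    (g0 : g 0 = 0) (glast : g (Fin.last μ) = n)
    (hcolΔ : ∀ j : Fin μ, ∀ k : ℕ, g j.castSucc ≤ k → k < g j.succ →
      ∑ i, φ k i * Δ i = ∑ i, φ (g j.succ - 1) i * Δ i)
    (hcolδ₁ : ∀ j : Fin μ, ∀ k : ℕ, g j.castSucc ≤ k → k < g j.succ →
      ∑ i, φ k i * δ₁ i = ∑ i, φ (g j.succ - 1) i * δ₁ i)
    (Ω : Fin μ → ℂ)
    (hΩ : ∀ j : Fin μ, Ω j =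
      (∑ i, φ (g j.succ - 1) i * Δ i) + ∑ i, φ (g j.succ - 1) i * δ₁ i)
    (hdist : Function.Injective fun j : Fin μ => Complex.exp (Ω j))
    (s : ℕ) (F : Fin μ → ℂ)
    (hF : ∀ ℓ : Fin μ, F ℓ = ∑ k ∈ Finset.range n, α k *
      Complex.exp (∑ i, φ k i *
        (((ℓ : ℕ) : ℂ) * (Δ i + δ₁ i) + (s : ℂ) * δ₂ i))) :
    (∀ ℓ : Fin μ, ∑ j : Fin μ,
        Complex.exp (((ℓ : ℕ) : ℂ) * Ω j) *
          (∑ k ∈ Finset.Ico (g j.castSucc) (g j.succ),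
            α k * Complex.exp (∑ i, φ k i * ((s : ℂ) * δ₂ i))) = F ℓ) ∧
    ∀ A : Fin μ → ℂ,
      (∀ ℓ : Fin μ, ∑ j : Fin μ,
        Complex.exp (((ℓ : ℕ) : ℂ) * Ω j) * A j = F ℓ) →
      A = fun j => ∑ k ∈ Finset.Ico (g j.castSucc) (g j.succ),
        α k * Complex.exp (∑ i, φ k i * ((s : ℂ) * δ₂ i)) :=
  second_level_identification_system_general d n μ φ α Δ δ₁ δ₂ g gmono g0 glast hcolΔ hcolδ₁ Ω hΩ
    hdist s F hF
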